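/- Let (G,γ) be a Z/3Z-colored graph and let G̃ be its development. If G̃ is not Laman-sparse (i.e., not (2,3)-sparse), then (G,γ) is not cone-Laman-sparse. Equivalently, if (G,γ) is cone-Laman-sparse then G̃ is Laman-sparse. -/

import Mathlib

/-- A finite directed multigraph: each edge has a tail and a head vertex. -/
structure Multigraph (V : Type) (E : Type) where
  tail : E → V
  head : E → V

namespace Multigraph

variable {V E Γ : Type}

/-- The starting vertex of a step `(e, b)`: the edge `e` traversed forwards if `b = true`,
backwards otherwise. -/
def stepSrc (G : Multigraph V E) (s : E × Bool) : V :=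
  if s.2 then G.tail s.1 else G.head s.1

/-- The ending vertex of a step `(e, b)`. -/
def stepDst (G : Multigraph V E) (s : E × Bool) : V :=
  if s.2 then G.head s.1 else G.tail s.1

/-- `G.WalkFrom u v w`: the list of steps `w` is a walk from `u` to `v`
(edge orientations ignored: each step records an edge and a traversal direction). -/
inductive WalkFrom (G : Multigraph V E) : V → V → List (E × Bool) → Prop
  | nil (v : V) : WalkFrom G v v []
  | cons {v : V} (s : E × Bool) {rest : List (E × Bool)} :
      WalkFrom G (G.stepDst s) v rest → WalkFrom G (G.stepSrc s) v (s :: rest)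

/-- `ρ` of a walk: the sum of the colors of forward-traversed edges minus
the sum of the colors of backward-traversed edges. -/
def rho [AddCommGroup Γ] (γ : E → Γ) (w : List (E × Bool)) : Γ :=
  (w.map fun s => if s.2 then γ s.1 else -γ s.1).sum

/-- A cycle contained in the subgraph with edge set `S`: a nonempty closed walk,
with no repeated edges and no repeated vertices. -/
def IsCycleIn (G : Multigraph V E) (S : Finset E) (w : List (E × Bool)) : Prop :=
  (∃ v, G.WalkFrom v v w) ∧ w ≠ [] ∧ (∀ s ∈ w, s.1 ∈ S) ∧
    (w.map Prod.fst).Nodup ∧ (w.map G.stepSrc).Nodup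

/-- The subgraph with edge set `S` has trivial `Γ`-image: `ρ(C) = 0` for every
cycle `C` contained in it. -/
def TrivialImage [AddCommGroup Γ] (G : Multigraph V E) (γ : E → Γ) (S : Finset E) : Prop :=
  ∀ w, G.IsCycleIn S w → rho γ w = 0

/-- The vertices spanned by an edge set. -/
def verts [DecidableEq V] (G : Multigraph V E) (S : Finset E) : Finset V :=
  S.image G.tail ∪ S.image G.head

/-- The edge set `S` is `(k, ℓ)`-sparse: every nonempty subgraph with `n'` vertices and
`m'` edges satisfies `m' ≤ k n' - ℓ`. -/
def Sparse [DecidableEq V] (G : Multigraph V E) (k ℓ : ℤ) (S : Finset E) : Prop :=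
  ∀ S' ⊆ S, S'.Nonempty → (S'.card : ℤ) ≤ k * ((G.verts S').card : ℤ) - ℓ

/-- The edge set `S` is a `(k, ℓ)`-graph (as a subgraph on its spanned vertices):
it is `(k, ℓ)`-sparse and has exactly `k n - ℓ` edges. -/
def Tight [DecidableEq V] (G : Multigraph V E) (k ℓ : ℤ) (S : Finset E) : Prop :=
  G.Sparse k ℓ S ∧ (S.card : ℤ) = k * ((G.verts S).card : ℤ) - ℓ

/-- The edge set `S` is a `(k, ℓ)`-circuit: edge-minimal not `(k, ℓ)`-sparse. -/
def Circuit [DecidableEq V] [DecidableEq E] (G : Multigraph V E) (k ℓ : ℤ) (S : Finset E) :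
    Prop :=
  ¬ G.Sparse k ℓ S ∧ ∀ e ∈ S, G.Sparse k ℓ (S.erase e)

/-- A `(k, ℓ)`-basis of `G`: a maximal `(k, ℓ)`-sparse edge set. -/
def Basis [DecidableEq V] (G : Multigraph V E) (k ℓ : ℤ) (L : Finset E) : Prop :=
  G.Sparse k ℓ L ∧ ∀ L', L ⊆ L' → G.Sparse k ℓ L' → L' = L

/-- `C` is the fundamental `(k, ℓ)`-circuit of some edge `e ∉ L` with respect to the
`(k, ℓ)`-basis `L`: a `(k, ℓ)`-circuit contained in `L + e`. -/
def FundCircuit [DecidableEq V] [DecidableEq E] (G : Multigraph V E) (k ℓ : ℤ)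
    (L C : Finset E) : Prop :=
  G.Circuit k ℓ C ∧ ∃ e, e ∉ L ∧ C ⊆ insert e L

/-- The whole graph `G` is a `(k, ℓ)`-graph: `(k, ℓ)`-sparse, with exactly
`k n - ℓ` edges where `n` is the number of vertices of `G`. -/
def IsKLGraph [DecidableEq V] [Fintype V] [Fintype E] (G : Multigraph V E) (k ℓ : ℤ) : Prop :=
  G.Sparse k ℓ Finset.univ ∧ (Fintype.card E : ℤ) = k * (Fintype.card V : ℤ) - ℓ

/-- The colored subgraph with edge set `S` is Ross-sparse: nonempty subgraphs with trivial
`Γ`-image satisfy `m' ≤ 2n' - 3`, and those with non-trivial image satisfy `m' ≤ 2n' - 2`. -/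
def RossSparseOn [DecidableEq V] [AddCommGroup Γ] (G : Multigraph V E) (γ : E → Γ)
    (S : Finset E) : Prop :=
  ∀ S' ⊆ S, S'.Nonempty →
    (G.TrivialImage γ S' → (S'.card : ℤ) ≤ 2 * ((G.verts S').card : ℤ) - 3) ∧
    (¬ G.TrivialImage γ S' → (S'.card : ℤ) ≤ 2 * ((G.verts S').card : ℤ) - 2)

/-- The colored subgraph with edge set `S` is a Ross graph (on its spanned vertices):
Ross-sparse with exactly `2n - 2` edges. -/
def RossGraphOn [DecidableEq V] [AddCommGroup Γ] (G : Multigraph V E) (γ : E → Γ)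
    (S : Finset E) : Prop :=
  G.RossSparseOn γ S ∧ (S.card : ℤ) = 2 * ((G.verts S).card : ℤ) - 2

/-- The whole colored graph `(G, γ)` is a Ross graph: Ross-sparse with exactly `2n - 2`
edges, `n` being the number of vertices of `G`. -/
def RossGraph [DecidableEq V] [Fintype V] [Fintype E] [AddCommGroup Γ] (G : Multigraph V E)
    (γ : E → Γ) : Prop :=
  G.RossSparseOn γ Finset.univ ∧ (Fintype.card E : ℤ) = 2 * (Fintype.card V : ℤ) - 2

/-- The colored graph `(G, γ)` is cone-Laman-sparse: nonempty subgraphs with trivial image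
satisfy `m' ≤ 2n' - 3`, those with non-trivial image satisfy `m' ≤ 2n' - 1`. -/
def ConeLamanSparse [DecidableEq V] [AddCommGroup Γ] (G : Multigraph V E) (γ : E → Γ) : Prop :=
  ∀ S' : Finset E, S'.Nonempty →
    (G.TrivialImage γ S' → (S'.card : ℤ) ≤ 2 * ((G.verts S').card : ℤ) - 3) ∧
    (¬ G.TrivialImage γ S' → (S'.card : ℤ) ≤ 2 * ((G.verts S').card : ℤ) - 1)

/-- The whole colored graph `(G, γ)` is a cone-Laman graph: cone-Laman-sparse with exactly
`2n - 1` edges, `n` being the number of vertices of `G`. -/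
def ConeLamanGraph [DecidableEq V] [Fintype V] [Fintype E] [AddCommGroup Γ]
    (G : Multigraph V E) (γ : E → Γ) : Prop :=
  G.ConeLamanSparse γ ∧ (Fintype.card E : ℤ) = 2 * (Fintype.card V : ℤ) - 1

/-- A (simple) path from `u` to `v` using only edges in `S`: a walk visiting no vertex
twice. -/
def IsPathIn (G : Multigraph V E) (S : Finset E) (u v : V) (w : List (E × Bool)) : Prop :=
  G.WalkFrom u v w ∧ (∀ s ∈ w, s.1 ∈ S) ∧ (u :: w.map G.stepDst).Nodup

/-- `G` is connected. -/
def Connected (G : Multigraph V E) : Prop :=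
  ∀ u v : V, ∃ w : List (E × Bool), G.WalkFrom u v w

/-- `T` is a spanning tree of `G`: every pair of vertices is joined by a path in `T`,
and `T` contains no cycle. -/
def IsSpanningTree (G : Multigraph V E) (T : Finset E) : Prop :=
  (∀ u v : V, ∃ w, G.IsPathIn T u v w) ∧ ∀ w, ¬ G.IsCycleIn T w

/-- `T` is a spanning forest of `G`: a maximal acyclic edge set. -/
def IsSpanningForest (G : Multigraph V E) (T : Finset E) : Prop :=
  (∀ w, ¬ G.IsCycleIn T w) ∧
    ∀ T', T ⊆ T' → (∀ w, ¬ G.IsCycleIn T' w) → T' = T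

/-- In the tree `T` rooted at `r`, vertex `x` lies on the (unique) path from the root `r`
to `y`; i.e. `x` is an ancestor of `y`. -/
def Anc (G : Multigraph V E) (T : Finset E) (r x y : V) : Prop :=
  ∀ w, G.IsPathIn T r y w → x ∈ (r :: w.map G.stepDst)

/-- `a` is the least common ancestor of `i` and `j` in the tree `T` rooted at `r`:
the vertex where the paths from `i` to `r` and from `j` to `r` first converge. -/
def IsLCA (G : Multigraph V E) (T : Finset E) (r a i j : V) : Prop :=
  G.Anc T r a i ∧ G.Anc T r a j ∧ ∀ x, G.Anc T r x i → G.Anc T r x j → G.Anc T r x a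

/-- The development of a `ℤ/3ℤ`-colored graph: vertices `i_z`, and for each edge `ij`
with color `γ_ij` the three edges `i_z j_{z + γ_ij}`. -/
def Development (G : Multigraph V E) (γ : E → ZMod 3) :
    Multigraph (V × ZMod 3) (E × ZMod 3) where
  tail s := (G.tail s.1, s.2)
  head s := (G.head s.1, s.2 + γ s.1)

/-- The lift `π⁻¹(S)` in the development of the subgraph with edge set `S`. -/
def lift [DecidableEq E] (S : Finset E) : Finset (E × ZMod 3) :=
  S ×ˢ (Finset.univ : Finset (ZMod 3))

/-- The map `α_z : i_w ↦ i_{w+z}` on the vertices of the development. -/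
def devShift (z : ZMod 3) : V × ZMod 3 → V × ZMod 3 :=
  fun p => (p.1, p.2 + z)

/-- The map `α_z` on the edges of the development. -/
def devShiftE (z : ZMod 3) : E × ZMod 3 → E × ZMod 3 :=
  fun s => (s.1, s.2 + z)

/-- Two vertices of a multigraph are adjacent if some edge joins them (in either
direction). -/
def Adj (G : Multigraph V E) (u v : V) : Prop :=
  ∃ e, (G.tail e = u ∧ G.head e = v) ∨ (G.tail e = v ∧ G.head e = u)

end Multigraph

/-! A minimal non-Laman-sparse edge set `C` of the development (a Laman circuit) projects to an
edge set `S` of `G`. If `C` meets its translate `C + 1`, gluing `C`, `C + 1`, `C + 2` one at a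
time keeps `m ≥ 2n - 2`, because each translate is again a circuit and vertex counts are
submodular; the union is the whole lift of `S`, with `3|S|` edges on `3 n(S)` vertices, so
`|S| ≥ 2 n(S)`. Otherwise `C` maps injectively onto `S`. If it is also injective on vertices, the
sheet indices form a potential for `γ`, so `S` has trivial image while `|S| = |C| > 2 n(S) - 3`;
if not, `S` has fewer vertices than `C` and again `|S| ≥ 2 n(S)`. -/

namespace Multigraph

open Finset

variable {V E : Type} [DecidableEq V]

section Counting

variable (G : Multigraph V E)

theorem verts_union [DecidableEq E] (X Y : Finset E) :
    G.verts (X ∪ Y) = G.verts X ∪ G.verts Y := by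
  simp only [verts, image_union]
  ac_rfl

theorem verts_mono {X Y : Finset E} (h : X ⊆ Y) : G.verts X ⊆ G.verts Y :=
  union_subset_union (image_subset_image h) (image_subset_image h)

theorem card_verts_union_add_card_verts_inter_le [DecidableEq E] (X Y : Finset E) :
    #(G.verts (X ∪ Y)) + #(G.verts (X ∩ Y)) ≤ #(G.verts X) + #(G.verts Y) := by
  have hinter : G.verts (X ∩ Y) ⊆ G.verts X ∩ G.verts Y :=
    subset_inter (G.verts_mono inter_subset_left) (G.verts_mono inter_subset_right)
  rw [verts_union, ← card_union_add_card_inter (G.verts X)]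
  exact Nat.add_le_add_left (card_le_card hinter) _

end Counting

section Circuits

variable {G : Multigraph V E} {k ℓ : ℤ}

theorem Sparse.mono {X Y : Finset E} (hY : G.Sparse k ℓ Y) (h : X ⊆ Y) : G.Sparse k ℓ X :=
  fun S' hS' => hY S' (hS'.trans h)

variable [DecidableEq E]

theorem exists_circuit_of_not_sparse {S : Finset E} (h : ¬ G.Sparse k ℓ S) :
    ∃ C ⊆ S, G.Circuit k ℓ C := by
  induction S using Finset.strongInduction with
  | H S ih =>
    by_cases hS : ∀ e ∈ S, G.Sparse k ℓ (S.erase e)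
    · exact ⟨S, subset_rfl, h, hS⟩
    · push Not at hS
      obtain ⟨e, he, hne⟩ := hS
      obtain ⟨C, hCS, hC⟩ := ih _ (erase_ssubset he) hne
      exact ⟨C, hCS.trans (erase_subset e S), hC⟩

namespace Circuit

variable {C : Finset E} (hC : G.Circuit k ℓ C)
include hC

theorem sparse_of_ssubset {X : Finset E} (hX : X ⊂ C) : G.Sparse k ℓ X := by
  obtain ⟨e, heC, heX⟩ := exists_of_ssubset hX
  exact (hC.2 e heC).mono fun x hx => mem_erase.2 ⟨ne_of_mem_of_not_mem hx heX, hX.subset hx⟩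

theorem lt_card : k * #(G.verts C) - ℓ < #C := by
  obtain ⟨X, hXC, hXne, hX⟩ : ∃ X ⊆ C, X.Nonempty ∧ k * #(G.verts X) - ℓ < #X := by
    simpa [Sparse] using hC.1
  obtain rfl | hssub := hXC.eq_or_ssubset
  · exact hX
  · exact absurd (hC.sparse_of_ssubset hssub X subset_rfl hXne) hX.not_ge

theorem nonempty : C.Nonempty := by
  obtain ⟨X, hXC, hXne, -⟩ : ∃ X ⊆ C, X.Nonempty ∧ _ := by simpa [Sparse] using hC.1
  exact hXne.mono hXC

theorem le_card_union (hk : 0 ≤ k) {X : Finset E} {a : ℤ} (hXC : (X ∩ C).Nonempty)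
    (hX : k * #(G.verts X) - a ≤ #X) : k * #(G.verts (X ∪ C)) - a ≤ #(X ∪ C) := by
  by_cases hCX : C ⊆ X
  · rwa [union_eq_left.2 hCX]
  have hinter : #(X ∩ C) ≤ k * #(G.verts (X ∩ C)) - ℓ :=
    hC.sparse_of_ssubset (ssubset_of_subset_of_ne inter_subset_right
      fun h => hCX (h ▸ inter_subset_left)) _ subset_rfl hXC
  have hsub : (#(G.verts (X ∪ C)) : ℤ) + #(G.verts (X ∩ C)) ≤ #(G.verts X) + #(G.verts C) := by
    exact_mod_cast G.card_verts_union_add_card_verts_inter_le X C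
  have hcard : (#(X ∪ C) : ℤ) + #(X ∩ C) = #X + #C := by
    exact_mod_cast card_union_add_card_inter X C
  have hsubk := mul_le_mul_of_nonneg_left hsub hk
  linarith [hC.lt_card]

end Circuit

end Circuits

section Automorphism

variable [DecidableEq E] (G : Multigraph V E) (f : E ≃ E) (g : V ≃ V)
  (htail : ∀ e, G.tail (f e) = g (G.tail e)) (hhead : ∀ e, G.head (f e) = g (G.head e))
include htail hhead

theorem verts_map (X : Finset E) :
    G.verts (X.map f.toEmbedding) = (G.verts X).map g.toEmbedding := by
  simp only [verts, map_eq_image, image_union, image_image]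
  congr 1 <;> exact image_congr fun e _ => by simp [htail, hhead]

theorem sparse_map_iff {k ℓ : ℤ} {X : Finset E} :
    G.Sparse k ℓ (X.map f.toEmbedding) ↔ G.Sparse k ℓ X := by
  simp only [Sparse, subset_map_iff, forall_exists_index, and_imp]
  constructor
  · intro h S' hS' hne
    simpa [G.verts_map f g htail hhead] using h _ S' hS' rfl (map_nonempty.2 hne)
  · rintro h _ S' hS' rfl hne
    simpa [G.verts_map f g htail hhead] using h S' hS' (map_nonempty.1 hne)

theorem circuit_map {k ℓ : ℤ} {C : Finset E} (hC : G.Circuit k ℓ C) :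
    G.Circuit k ℓ (C.map f.toEmbedding) := by
  refine ⟨(G.sparse_map_iff f g htail hhead).not.2 hC.1, ?_⟩
  simp only [forall_mem_map]
  intro e he
  rw [← map_erase, G.sparse_map_iff f g htail hhead]
  exact hC.2 e he

end Automorphism

section Potential

omit [DecidableEq V]

variable {Γ : Type} [AddCommGroup Γ] (G : Multigraph V E) (γ : E → Γ) (S : Finset E)
  (ψ : V → Γ) (hψ : ∀ e ∈ S, ψ (G.head e) = ψ (G.tail e) + γ e)
include hψ

theorem rho_eq_sub_of_walkFrom {u v : V} {w : List (E × Bool)} (hw : G.WalkFrom u v w)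
    (hwS : ∀ s ∈ w, s.1 ∈ S) : rho γ w = ψ v - ψ u := by
  induction hw with
  | nil v => simp [rho]
  | cons s _ ih =>
    obtain ⟨e, b⟩ := s
    have ih := ih fun t ht => hwS t (List.mem_cons_of_mem _ ht)
    have hs := hψ e (hwS _ List.mem_cons_self)
    simp only [rho, List.map_cons, List.sum_cons] at ih ⊢
    cases b <;> simp only [stepSrc, stepDst, Bool.false_eq_true, if_true, if_false] at ih ⊢
    · rw [ih, hs, neg_add_eq_sub, sub_sub]
    · rw [ih, hs]; abel

theorem trivialImage_of_potential : G.TrivialImage γ S := by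
  rintro w ⟨⟨v, hv⟩, -, hwS, -, -⟩
  rw [G.rho_eq_sub_of_walkFrom γ S ψ hψ hv hwS, sub_self]

end Potential

theorem not_coneLamanSparse_of_two_mul_le_card {Γ : Type} [AddCommGroup Γ] {G : Multigraph V E}
    {γ : E → Γ} {S : Finset E} (hS : S.Nonempty) (h : 2 * #(G.verts S) ≤ #S) :
    ¬ G.ConeLamanSparse γ := by
  intro hCL
  obtain ⟨htriv, hnontriv⟩ := hCL S hS
  by_cases hγ : G.TrivialImage γ S
  · have := htriv hγ
    omega
  · have := hnontriv hγ
    omega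

section Development

/-- The map `α_z` of the development, as an equivalence; it acts on vertices and on edges alike. -/
def devShiftEquiv {α : Type} (z : ZMod 3) : α × ZMod 3 ≃ α × ZMod 3 :=
  Equiv.prodCongr (Equiv.refl α) (Equiv.addRight z)

def shift (z : ZMod 3) (X : Finset (E × ZMod 3)) : Finset (E × ZMod 3) :=
  X.map (devShiftEquiv z).toEmbedding

theorem mem_shift {z : ZMod 3} {X : Finset (E × ZMod 3)} {p : E × ZMod 3} :
    p ∈ shift z X ↔ (p.1, p.2 - z) ∈ X := by
  obtain ⟨e, w⟩ := p
  simp [shift, devShiftEquiv, sub_eq_add_neg]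

theorem injOn_fst_of_disjoint_shift {C : Finset (E × ZMod 3)} (h : Disjoint C (shift 1 C)) :
    Set.InjOn Prod.fst (C : Set (E × ZMod 3)) := by
  rintro ⟨e, a⟩ ha ⟨e', b⟩ hb (rfl : e = e')
  have : ∀ a b : ZMod 3, a = b ∨ b = a + 1 ∨ a = b + 1 := by decide
  rcases this a b with rfl | rfl | rfl
  · rfl
  · exact absurd (mem_shift.2 (by simpa using ha)) (disjoint_left.1 h hb)
  · exact absurd (mem_shift.2 (by simpa using hb)) (disjoint_left.1 h ha)

variable [DecidableEq E] {G : Multigraph V E} {γ : E → ZMod 3}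

theorem circuit_shift {k ℓ : ℤ} {C : Finset (E × ZMod 3)}
    (hC : (G.Development γ).Circuit k ℓ C) (z : ZMod 3) :
    (G.Development γ).Circuit k ℓ (shift z C) :=
  circuit_map _ (devShiftEquiv z) (devShiftEquiv z) (fun _ => rfl)
    (fun s => by simp [Development, devShiftEquiv, add_right_comm]) hC

theorem union_shift_eq_lift (C : Finset (E × ZMod 3)) :
    C ∪ shift 1 C ∪ shift 2 C = lift (C.image Prod.fst) := by
  ext ⟨e, w⟩
  simp only [mem_union, mem_shift, lift, mem_product, mem_image, mem_univ, and_true,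
    Prod.exists, exists_and_right, exists_eq_right]
  constructor
  · rintro ((h | h) | h) <;> exact ⟨_, h⟩
  · rintro ⟨z, hz⟩
    have : ∀ a b : ZMod 3, b = a ∨ b = a - 1 ∨ b = a - 2 := by decide
    rcases this w z with rfl | rfl | rfl <;> simp [hz]

theorem verts_development_lift (S : Finset E) :
    (G.Development γ).verts (lift S) = G.verts S ×ˢ univ := by
  ext ⟨v, w⟩
  simp only [verts, Development, lift, mem_union, mem_image, mem_product, mem_univ, and_true,
    Prod.exists, Prod.mk.injEq]
  constructor
  · rintro (⟨e, z, he, rfl, rfl⟩ | ⟨e, z, he, rfl, rfl⟩)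
    exacts [Or.inl ⟨e, he, rfl⟩, Or.inr ⟨e, he, rfl⟩]
  · rintro (⟨e, he, rfl⟩ | ⟨e, he, rfl⟩)
    exacts [Or.inl ⟨e, w, he, rfl, rfl⟩, Or.inr ⟨e, w - γ e, he, rfl, sub_add_cancel w _⟩]

theorem image_fst_verts_development (C : Finset (E × ZMod 3)) :
    ((G.Development γ).verts C).image Prod.fst = G.verts (C.image Prod.fst) := by
  simp only [verts, image_union, image_image]
  rfl

theorem Circuit.two_mul_card_verts_image_fst_le {C : Finset (E × ZMod 3)}
    (hC : (G.Development γ).Circuit 2 3 C) (hmeet : ¬ Disjoint C (shift 1 C)) :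
    2 * #(G.verts (C.image Prod.fst)) ≤ #(C.image Prod.fst) := by
  obtain ⟨⟨e, w⟩, hC₀, hC₁⟩ := not_disjoint_iff.1 hmeet
  have hfirst : (C ∩ shift 1 C).Nonempty := ⟨_, mem_inter.2 ⟨hC₀, hC₁⟩⟩
  have hsecond : ((C ∪ shift 1 C) ∩ shift 2 C).Nonempty := by
    refine ⟨(e, w + 1), mem_inter.2 ⟨mem_union_right _ (mem_shift.2 ?_), mem_shift.2 ?_⟩⟩
    · rwa [add_sub_cancel_right]
    · rw [show w + 1 - 2 = w - 1 by ring]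
      exact mem_shift.1 hC₁
  have hlift : 2 * (#((G.Development γ).verts (lift (C.image Prod.fst))) : ℤ) - 2
      ≤ #(lift (C.image Prod.fst)) := by
    rw [← union_shift_eq_lift]
    refine (circuit_shift hC 2).le_card_union zero_le_two hsecond
      ((circuit_shift hC 1).le_card_union zero_le_two hfirst ?_)
    linarith [hC.lt_card]
  rw [verts_development_lift, lift, card_product, card_product, card_univ, ZMod.card] at hlift
  omega

theorem trivialImage_image_fst_of_injOn {C : Finset (E × ZMod 3)}
    (h : Set.InjOn Prod.fst ((G.Development γ).verts C : Set (V × ZMod 3))) :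
    G.TrivialImage γ (C.image Prod.fst) := by
  set ψ : V → ZMod 3 := fun v => Classical.epsilon fun z => (v, z) ∈ (G.Development γ).verts C
  have hψ : ∀ p ∈ (G.Development γ).verts C, ψ p.1 = p.2 := fun p hp =>
    congrArg Prod.snd (h (Classical.epsilon_spec (p := fun z => (p.1, z) ∈ _) ⟨p.2, hp⟩) hp rfl)
  refine G.trivialImage_of_potential γ _ ψ ?_
  simp only [mem_image, Prod.exists, exists_and_right, exists_eq_right, forall_exists_index]
  intro e w he
  rw [hψ (G.head e, w + γ e) (mem_union_right _ (mem_image_of_mem _ he)),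
    hψ (G.tail e, w) (mem_union_left _ (mem_image_of_mem _ he))]

end Development

end Multigraph

open Multigraph Finset

theorem development_not_sparse_implies_not_cone_laman_sparse_general
    {V E : Type} [Fintype E] [DecidableEq V] [DecidableEq E]
    (G : Multigraph V E) (γ : E → ZMod 3)
    (hdev : ¬ (G.Development γ).Sparse 2 3 Finset.univ) :
    ¬ G.ConeLamanSparse γ := by
  obtain ⟨C, -, hC⟩ := exists_circuit_of_not_sparse hdev
  have hS : (C.image Prod.fst).Nonempty := hC.nonempty.image _
  by_cases hdisj : Disjoint C (shift 1 C)
  swap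
  · exact not_coneLamanSparse_of_two_mul_le_card hS (hC.two_mul_card_verts_image_fst_le hdisj)
  have hcard : #(C.image Prod.fst) = #C := card_image_of_injOn (injOn_fst_of_disjoint_shift hdisj)
  have hverts : #(((G.Development γ).verts C).image Prod.fst) ≤ #((G.Development γ).verts C) :=
    card_image_le
  rw [image_fst_verts_development] at hverts
  have hdense := hC.lt_card
  rcases hverts.eq_or_lt with heq | hlt
  · have hinj : Set.InjOn Prod.fst ((G.Development γ).verts C : Set (V × ZMod 3)) :=
      card_image_iff.1 (by rwa [image_fst_verts_development])
    intro hCL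
    have := (hCL _ hS).1 (trivialImage_image_fst_of_injOn hinj)
    omega
  · exact not_coneLamanSparse_of_two_mul_le_card hS (by omega)

/-- if the development is not Laman-sparse, then `(G, γ)` is not
cone-Laman-sparse. -/
theorem development_not_sparse_implies_not_cone_laman_sparse
    {V E : Type} [Fintype V] [Fintype E] [DecidableEq V] [DecidableEq E]
    (G : Multigraph V E) (γ : E → ZMod 3)
    (hdev : ¬ (G.Development γ).Sparse 2 3 Finset.univ) :
    ¬ G.ConeLamanSparse γ :=
  development_not_sparse_implies_not_cone_laman_sparse_general G γ hdev
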